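/- Let y : [0,∞) → E be a nonconformity flow trajectory, let m > 0 and t₀ ≥ 0, and assume ‖∇S(y(t))‖ ≥ m for all t ≥ t₀. Then the trajectory has finite arc length on [t₀, ∞): the integral ∫_{t₀}^∞ ‖y'(u)‖ du is finite, and moreover ∫_{t}^∞ ‖y'(u)‖ du ≤ (1/m)·|S(y(0)) − τ|·e^{−λ t} for every t ≥ t₀. -/

import Mathlib

/-!
Along the flow, `d/dt (S(y t) - τ) = ⟪∇S, v⟫ = -λ (S(y t) - τ)`, so the residual decays exactly:
`S(y t) - τ = (S(y 0) - τ) e^{-λt}`. The speed is `‖v‖ = λ |S - τ| / ‖∇S‖`, which after `t₀` is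
bounded by `(λ/m) |S(y 0) - τ| e^{-λt}`; integrating this exponential bound over `(t, ∞)` gives
both the integrability and the tail estimate.
-/

open scoped RealInnerProductSpace

/-- The nonconformity velocity field
`v(y) = -λ (S y - τ) ∇S(y) / ‖∇S(y)‖²`. -/
noncomputable def ncVel {n : ℕ} (S : EuclideanSpace ℝ (Fin n) → ℝ) (τ lam : ℝ)
    (y : EuclideanSpace ℝ (Fin n)) : EuclideanSpace ℝ (Fin n) :=
  (-lam * (S y - τ) / ‖gradient S y‖ ^ 2) • gradient S y
open MeasureTheory

open Set Real

theorem eq_mul_exp_of_hasDerivAt_eq_neg_mul {f : ℝ → ℝ} {c : ℝ}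
    (hf : ∀ t, 0 ≤ t → HasDerivAt f (-c * f t) t) {t : ℝ} (ht : 0 ≤ t) :
    f t = f 0 * exp (-c * t) := by
  have hprod : ∀ x, 0 ≤ x → HasDerivAt (fun u => f u * exp (c * u)) 0 x := by
    intro x hx
    have hexp : HasDerivAt (fun u => exp (c * u)) (exp (c * x) * c) x := by
      simpa using ((hasDerivAt_id x).const_mul c).exp
    exact ((hf x hx).mul hexp).congr_deriv (by ring)
  have hconst : f t * exp (c * t) = f 0 * exp (c * 0) :=
    constant_of_has_deriv_right_zero
      (fun x hx => (hprod x hx.1).continuousAt.continuousWithinAt)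
      (fun x hx => (hprod x hx.1).hasDerivWithinAt) t ⟨ht, le_rfl⟩
  rw [mul_zero, exp_zero, mul_one] at hconst
  rw [neg_mul, exp_neg, ← hconst, mul_inv_cancel_right₀ (exp_ne_zero _)]

theorem integrableOn_Ioi_of_norm_le_exp {E : Type*} [NormedAddCommGroup E] {g : ℝ → E}
    {K lam a : ℝ} (hlam : 0 < lam)
    (hg : AEStronglyMeasurable g) (hle : ∀ u, a ≤ u → ‖g u‖ ≤ K * exp (-lam * u)) :
    IntegrableOn g (Ioi a) :=
  ((exp_neg_integrableOn_Ioi a hlam).const_mul K).mono' hg.restrict <|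
    (ae_restrict_iff' measurableSet_Ioi).2 <| .of_forall fun u hu => hle u hu.le

theorem setIntegral_Ioi_le_of_le_exp {g : ℝ → ℝ} {K lam a : ℝ} (hlam : 0 < lam)
    (hg : IntegrableOn g (Ioi a)) (hle : ∀ u, a ≤ u → g u ≤ K * exp (-lam * u)) :
    ∫ u in Ioi a, g u ≤ K / lam * exp (-lam * a) := by
  calc ∫ u in Ioi a, g u ≤ ∫ u in Ioi a, K * exp (-lam * u) :=
        setIntegral_mono_on hg ((exp_neg_integrableOn_Ioi a hlam).const_mul K)
          measurableSet_Ioi fun u hu => hle u hu.le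
    _ = K / lam * exp (-lam * a) := by
        rw [integral_const_mul, integral_exp_mul_Ioi (neg_lt_zero.2 hlam)]
        field_simp

section Flow

variable {n : ℕ} {S : EuclideanSpace ℝ (Fin n) → ℝ} {τ lam : ℝ}

theorem inner_gradient_ncVel {x : EuclideanSpace ℝ (Fin n)} (hx : gradient S x ≠ 0) :
    ⟪gradient S x, ncVel S τ lam x⟫ = -lam * (S x - τ) := by
  rw [ncVel, real_inner_smul_right, real_inner_self_eq_norm_sq]
  have : ‖gradient S x‖ ≠ 0 := norm_ne_zero_iff.2 hx
  field_simp

theorem norm_ncVel (x : EuclideanSpace ℝ (Fin n)) :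
    ‖ncVel S τ lam x‖ = |lam| * |S x - τ| / ‖gradient S x‖ := by
  rw [ncVel, norm_smul, norm_div, norm_mul, norm_neg, norm_pow, norm_norm,
    Real.norm_eq_abs, Real.norm_eq_abs]
  rcases eq_or_ne ‖gradient S x‖ 0 with h | h
  · simp [h]
  · field_simp

theorem HasDerivAt.score_sub_of_ncVel {y : ℝ → EuclideanSpace ℝ (Fin n)} {t : ℝ}
    (hS : DifferentiableAt ℝ S (y t)) (hy : HasDerivAt y (ncVel S τ lam (y t)) t)
    (hgrad : gradient S (y t) ≠ 0) :
    HasDerivAt (fun u => S (y u) - τ) (-lam * (S (y t) - τ)) t := by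
  have hchain := (hS.hasFDerivAt.comp_hasDerivAt t hy).sub_const τ
  rwa [hS.hasGradientAt.fderiv_apply, inner_gradient_ncVel hgrad] at hchain

end Flow

/-- if `‖∇S(y(t))‖ ≥ m` for all `t ≥ t₀`, the trajectory has
finite arc length on `[t₀, ∞)`, and the tail arc length satisfies
`∫_t^∞ ‖y'(u)‖ du ≤ (1/m) |S(y(0)) - τ| e^{-λ t}` for every `t ≥ t₀`. -/
theorem finite_arc_length {n : ℕ} (S : EuclideanSpace ℝ (Fin n) → ℝ)
    (hS : Differentiable ℝ S) (τ lam : ℝ) (hlam : 0 < lam)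
    (y : ℝ → EuclideanSpace ℝ (Fin n))
    (hy : ∀ t : ℝ, 0 ≤ t → HasDerivAt y (ncVel S τ lam (y t)) t)
    (hgrad : ∀ t : ℝ, 0 ≤ t → gradient S (y t) ≠ 0)
    (m t₀ : ℝ) (hm : 0 < m) (ht₀ : 0 ≤ t₀)
    (hlow : ∀ t : ℝ, t₀ ≤ t → m ≤ ‖gradient S (y t)‖) :
    IntegrableOn (fun u => ‖deriv y u‖) (Set.Ici t₀) volume ∧
      ∀ t : ℝ, t₀ ≤ t →
        ∫ u in Set.Ioi t, ‖deriv y u‖ ≤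
          (1 / m) * |S (y 0) - τ| * Real.exp (-lam * t) := by
  have hscore : ∀ t, 0 ≤ t → S (y t) - τ = (S (y 0) - τ) * exp (-lam * t) :=
    fun t => eq_mul_exp_of_hasDerivAt_eq_neg_mul (f := fun u => S (y u) - τ)
      fun t ht => (hy t ht).score_sub_of_ncVel (hS _) (hgrad t ht)
  have hspeed : ∀ u, t₀ ≤ u → ‖deriv y u‖ ≤ lam * |S (y 0) - τ| / m * exp (-lam * u) := by
    intro u hu
    have hu0 : 0 ≤ u := ht₀.trans hu
    rw [(hy u hu0).deriv, norm_ncVel, hscore u hu0, abs_mul, abs_of_pos hlam,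
      abs_of_pos (exp_pos _), div_mul_eq_mul_div, mul_assoc]
    gcongr
    exact hlow u hu
  have hint : IntegrableOn (fun u => ‖deriv y u‖) (Ioi t₀) :=
    integrableOn_Ioi_of_norm_le_exp hlam (measurable_deriv y).norm.aestronglyMeasurable
      fun u hu => (norm_norm _).trans_le (hspeed u hu)
  refine ⟨by rwa [integrableOn_Ici_iff_integrableOn_Ioi], fun t ht => ?_⟩
  calc ∫ u in Ioi t, ‖deriv y u‖ ≤ lam * |S (y 0) - τ| / m / lam * exp (-lam * t) :=
        setIntegral_Ioi_le_of_le_exp hlam (hint.mono_set (Ioi_subset_Ioi ht))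
          fun u hu => hspeed u (ht.trans hu)
    _ = 1 / m * |S (y 0) - τ| * exp (-lam * t) := by field_simp
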